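/- Every closed simply-typed λ-term M in normal form of type σ possesses a principal relational type, its 1-point 𝖬 ∈ ⟦σ⟧, with the property that for every closed simply-typed λ-term N of type σ, M =βη N if and only if ⊳ N : 𝖬 : σ. -/

import Mathlib

/-! Simple types over a base type `o`, and the relational semantics
(non-idempotent intersection types): `o` is interpreted by a countably
infinite set of atoms (here `ℕ`), and `σ → τ` by finite multisets over the
web of `σ` paired with the web of `τ`. -/

/-- Simple types over the base type `o`. -/
inductive Ty : Type
  | o : Ty
  | arrow : Ty → Ty → Ty

/-- The relational web of a simple type. -/
def Web : Ty → Type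
  | .o => ℕ
  | .arrow σ τ => Multiset (Web σ) × Web τ

/-- Typed de Bruijn variables. -/
inductive Var : List Ty → Ty → Type
  | zero {Γ σ} : Var (σ :: Γ) σ
  | succ {Γ σ τ} : Var Γ σ → Var (τ :: Γ) σ

/-- Intrinsically simply-typed λ-terms. -/
inductive Tm : List Ty → Ty → Type
  | var {Γ σ} : Var Γ σ → Tm Γ σ
  | lam {Γ σ τ} : Tm (σ :: Γ) τ → Tm Γ (Ty.arrow σ τ)
  | app {Γ σ τ} : Tm Γ (Ty.arrow σ τ) → Tm Γ σ → Tm Γ τ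

/-- Renamings between contexts. -/
def Ren (Γ Δ : List Ty) : Type := ∀ σ, Var Γ σ → Var Δ σ

/-- Lifting a renaming under a binder. -/
def Ren.lift {Γ Δ : List Ty} (ρ : Ren Γ Δ) (τ : Ty) : Ren (τ :: Γ) (τ :: Δ) :=
  fun _ v =>
    match v with
    | .zero => .zero
    | .succ w => .succ (ρ _ w)

/-- Applying a renaming to a term. -/
def rename : {Γ Δ : List Ty} → Ren Γ Δ → {σ : Ty} → Tm Γ σ → Tm Δ σ
  | _, _, ρ, _, .var v => .var (ρ _ v)
  | _, _, ρ, _, .lam M => .lam (rename (Ren.lift ρ _) M)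
  | _, _, ρ, _, .app M N => .app (rename ρ M) (rename ρ N)

/-- Substitutions between contexts. -/
def Subst (Γ Δ : List Ty) : Type := ∀ σ, Var Γ σ → Tm Δ σ

/-- Lifting a substitution under a binder. -/
def Subst.lift {Γ Δ : List Ty} (s : Subst Γ Δ) (τ : Ty) : Subst (τ :: Γ) (τ :: Δ) :=
  fun _ v =>
    match v with
    | .zero => .var .zero
    | .succ w => rename (fun _ u => Var.succ u) (s _ w)

/-- Applying a substitution to a term. -/
def subst : {Γ Δ : List Ty} → Subst Γ Δ → {σ : Ty} → Tm Γ σ → Tm Δ σ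
  | _, _, s, _, .var v => s _ v
  | _, _, s, _, .lam M => .lam (subst (Subst.lift s _) M)
  | _, _, s, _, .app M N => .app (subst s M) (subst s N)

/-- The substitution replacing the last variable by `N`. -/
def Subst.cons {Γ : List Ty} {σ : Ty} (N : Tm Γ σ) : Subst (σ :: Γ) Γ :=
  fun _ v =>
    match v with
    | .zero => N
    | .succ w => .var w

/-- Substitution of the last variable. -/
def subst1 {Γ : List Ty} {σ τ : Ty} (M : Tm (σ :: Γ) τ) (N : Tm Γ σ) : Tm Γ τ :=
  subst (Subst.cons N) M

/-- βη-convertibility of simply-typed λ-terms. -/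
inductive BetaEta : {Γ : List Ty} → {σ : Ty} → Tm Γ σ → Tm Γ σ → Prop
  | refl {Γ σ} (M : Tm Γ σ) : BetaEta M M
  | symm {Γ σ} {M N : Tm Γ σ} : BetaEta M N → BetaEta N M
  | trans {Γ σ} {M N P : Tm Γ σ} : BetaEta M N → BetaEta N P → BetaEta M P
  | app_congr {Γ σ τ} {M M' : Tm Γ (Ty.arrow σ τ)} {N N' : Tm Γ σ} :
      BetaEta M M' → BetaEta N N' → BetaEta (M.app N) (M'.app N')
  | lam_congr {Γ σ τ} {M M' : Tm (σ :: Γ) τ} : BetaEta M M' → BetaEta M.lam M'.lam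
  | beta {Γ σ τ} (M : Tm (σ :: Γ) τ) (N : Tm Γ σ) : BetaEta (Tm.app M.lam N) (subst1 M N)
  | eta {Γ σ τ} (M : Tm Γ (Ty.arrow σ τ)) :
      BetaEta M (Tm.lam (Tm.app (rename (fun _ v => Var.succ v) M) (Tm.var Var.zero)))

/-- Relational environments: a finite multiset over the web of `σ` for each
variable of type `σ` in the context. -/
def REnv (Γ : List Ty) : Type := ∀ σ, Var Γ σ → Multiset (Web σ)

/-- Extending a relational environment. -/
def REnv.cons {Γ : List Ty} {σ : Ty} (X : Multiset (Web σ)) (ρ : REnv Γ) :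
    REnv (σ :: Γ) :=
  fun _ v =>
    match v with
    | .zero => X
    | .succ w => ρ _ w

/-- The empty relational environment. -/
def REnv.nil : REnv [] := fun _ v => nomatch v

/-- The relational semantics of a typing sequent: `Sem M ρ α` means that the
tuple `(ρ, α)` belongs to the relational interpretation `⟦x̄:σ̄ ⊢ M : σ⟧`. -/
def Sem : {Γ : List Ty} → {σ : Ty} → Tm Γ σ → REnv Γ → Web σ → Prop
  | _, _, .var v, ρ, α => α ∈ ρ _ v
  | _, _, .lam M, ρ, α => Sem M (REnv.cons α.1 ρ) α.2
  | _, _, @Tm.app _ σ _ M N, ρ, α =>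
      ∃ Y : Multiset (Web σ), Sem M ρ (Y, α) ∧ ∀ β ∈ Y, Sem N ρ β

/-- `RelType M α σ` (written `⊳ M : α : σ` in the paper): the point `α`
belongs to the relational interpretation of the closed term `M : σ`. -/
def RelType {σ : Ty} (M : Tm [] σ) (α : Web σ) : Prop := Sem M REnv.nil α

/-- The Church type of booleans `𝐁 = o → o → o`. -/
def TyB : Ty := Ty.arrow .o (Ty.arrow .o .o)

/-- The Church boolean `𝐭𝐫𝐮𝐞 = λx y. x`. -/
def churchTrue : Tm [] TyB := .lam (.lam (.var (.succ .zero)))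

/-- The Church boolean `𝐟𝐚𝐥𝐬𝐞 = λx y. y`. -/
def churchFalse : Tm [] TyB := .lam (.lam (.var .zero))

/-- The relational point `[∗] → ∅ → ∗` of the type `𝐁`. -/
def boolPoint (ast : Web Ty.o) : Web TyB := ({ast}, (0, ast))

mutual
  /-- NeutralForm simply-typed λ-terms: a variable applied to normal arguments. -/
  inductive NeutralForm : {Γ : List Ty} → {σ : Ty} → Tm Γ σ → Prop
    | var {Γ σ} (v : Var Γ σ) : NeutralForm (Tm.var v)
    | app {Γ σ τ} {M : Tm Γ (Ty.arrow σ τ)} {N : Tm Γ σ} :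
        NeutralForm M → NormalForm N → NeutralForm (M.app N)

  /-- Simply-typed λ-terms in (β-)normal form. -/
  inductive NormalForm : {Γ : List Ty} → {σ : Ty} → Tm Γ σ → Prop
    | of_neutral {Γ σ} {M : Tm Γ σ} : NeutralForm M → NormalForm M
    | lam {Γ σ τ} {M : Tm (σ :: Γ) τ} : NormalForm M → NormalForm M.lam
end

/-!
The point `𝖬` is the principal point of the η-long β-normal form `C` of `M`: every neutral
subterm of base type of `C` is given its own fresh atom, and each bound variable is assigned
exactly the points its occurrences demand.

Let `P` be a β-normal form of `N` (Tait); the relational semantics is invariant under β, so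
`⊳ N : 𝖬` iff `⊳ P : 𝖬`. If `M =βη N`, normalization by evaluation shows that the η-long form
of `P` is `C` as well, and a β-normal term has the principal point of its η-long form. Conversely,
the semantics is covariant under η-expansion, so `⊳ P : 𝖬` gives `⊳ D : 𝖬` for the η-long form
`D` of `P`. As every atom of `𝖬` is produced by a single neutral of `C`, such a derivation
rebuilds `C` head variable by head variable: `D = C`, hence `M =βη C =βη P =βη N`.
-/

/-! ### Renaming and substitution -/

namespace Ren

@[ext] theorem ext {Γ Δ : List Ty} {r r' : Ren Γ Δ} (h : ∀ σ v, r σ v = r' σ v) : r = r' :=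
  funext fun σ => funext (h σ)

protected def id (Γ : List Ty) : Ren Γ Γ := fun _ v => v

def comp {Γ Δ Θ : List Ty} (r' : Ren Δ Θ) (r : Ren Γ Δ) : Ren Γ Θ := fun σ v => r' σ (r σ v)

/-- An `abbrev`, so that it unfolds to the `fun _ v => Var.succ v` of `Subst.lift` and
`BetaEta.eta`. -/
abbrev weak {Γ : List Ty} {τ : Ty} : Ren Γ (τ :: Γ) := fun _ v => Var.succ v

theorem lift_id (Γ : List Ty) (τ : Ty) : (Ren.id Γ).lift τ = Ren.id (τ :: Γ) := by
  ext σ v; cases v <;> rfl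

theorem lift_comp {Γ Δ Θ : List Ty} (r' : Ren Δ Θ) (r : Ren Γ Δ) (τ : Ty) :
    (r'.comp r).lift τ = (r'.lift τ).comp (r.lift τ) := by
  ext σ v; cases v <;> rfl

end Ren

theorem rename_id {Γ : List Ty} {σ : Ty} (M : Tm Γ σ) : rename (Ren.id Γ) M = M := by
  induction M with
  | var v => rfl
  | lam M ih => simp only [rename, Ren.lift_id, ih]
  | app M N ihM ihN => simp only [rename, ihM, ihN]

theorem rename_rename {Γ Δ Θ : List Ty} (r' : Ren Δ Θ) (r : Ren Γ Δ) {σ : Ty} (M : Tm Γ σ) :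
    rename r' (rename r M) = rename (r'.comp r) M := by
  induction M generalizing Δ Θ with
  | var v => rfl
  | lam M ih => simp only [rename, ih, Ren.lift_comp]
  | app M N ihM ihN => simp only [rename, ihM, ihN]

namespace Subst

@[ext] theorem ext {Γ Δ : List Ty} {s s' : Subst Γ Δ} (h : ∀ σ v, s σ v = s' σ v) : s = s' :=
  funext fun σ => funext (h σ)

def ofRen {Γ Δ : List Ty} (r : Ren Γ Δ) : Subst Γ Δ := fun σ v => .var (r σ v)

def renComp {Γ Δ Θ : List Ty} (s : Subst Δ Θ) (r : Ren Γ Δ) : Subst Γ Θ := fun σ v => s σ (r σ v)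

def compRen {Γ Δ Θ : List Ty} (r : Ren Δ Θ) (s : Subst Γ Δ) : Subst Γ Θ :=
  fun σ v => rename r (s σ v)

def comp {Γ Δ Θ : List Ty} (s' : Subst Δ Θ) (s : Subst Γ Δ) : Subst Γ Θ :=
  fun σ v => subst s' (s σ v)

def scons {Γ Δ : List Ty} {σ : Ty} (N : Tm Δ σ) (s : Subst Γ Δ) : Subst (σ :: Γ) Δ :=
  fun _ v => match v with | .zero => N | .succ w => s _ w

theorem lift_ofRen {Γ Δ : List Ty} (r : Ren Γ Δ) (τ : Ty) :
    (ofRen r).lift τ = ofRen (r.lift τ) := by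
  ext σ v; cases v <;> rfl

theorem lift_renComp {Γ Δ Θ : List Ty} (s : Subst Δ Θ) (r : Ren Γ Δ) (τ : Ty) :
    (s.renComp r).lift τ = (s.lift τ).renComp (r.lift τ) := by
  ext σ v; cases v <;> rfl

end Subst

theorem subst_ofRen {Γ Δ : List Ty} (r : Ren Γ Δ) {σ : Ty} (M : Tm Γ σ) :
    subst (Subst.ofRen r) M = rename r M := by
  induction M generalizing Δ with
  | var v => rfl
  | lam M ih => simp only [subst, rename, Subst.lift_ofRen, ih]
  | app M N ihM ihN => simp only [subst, rename, ihM, ihN]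

theorem subst_rename {Γ Δ Θ : List Ty} (s : Subst Δ Θ) (r : Ren Γ Δ) {σ : Ty} (M : Tm Γ σ) :
    subst s (rename r M) = subst (s.renComp r) M := by
  induction M generalizing Δ Θ with
  | var v => rfl
  | lam M ih => simp only [rename, subst, ih, Subst.lift_renComp]
  | app M N ihM ihN => simp only [rename, subst, ihM, ihN]

theorem Subst.lift_compRen {Γ Δ Θ : List Ty} (r : Ren Δ Θ) (s : Subst Γ Δ) (τ : Ty) :
    (s.compRen r).lift τ = (s.lift τ).compRen (r.lift τ) := by
  ext σ v
  cases v with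
  | zero => rfl
  | succ w => exact (rename_rename _ _ _).trans (rename_rename (r.lift τ) Ren.weak (s σ w)).symm

theorem rename_subst {Γ Δ Θ : List Ty} (r : Ren Δ Θ) (s : Subst Γ Δ) {σ : Ty} (M : Tm Γ σ) :
    rename r (subst s M) = subst (s.compRen r) M := by
  induction M generalizing Δ Θ with
  | var v => rfl
  | lam M ih => simp only [rename, subst, ih, Subst.lift_compRen]
  | app M N ihM ihN => simp only [rename, subst, ihM, ihN]

theorem Subst.lift_comp {Γ Δ Θ : List Ty} (s' : Subst Δ Θ) (s : Subst Γ Δ) (τ : Ty) :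
    (s'.comp s).lift τ = (s'.lift τ).comp (s.lift τ) := by
  ext σ v
  cases v with
  | zero => rfl
  | succ w => exact (rename_subst _ _ _).trans (subst_rename (s'.lift τ) Ren.weak (s σ w)).symm

theorem subst_subst {Γ Δ Θ : List Ty} (s' : Subst Δ Θ) (s : Subst Γ Δ) {σ : Ty} (M : Tm Γ σ) :
    subst s' (subst s M) = subst (s'.comp s) M := by
  induction M generalizing Δ Θ with
  | var v => rfl
  | lam M ih => simp only [subst, ih, Subst.lift_comp]
  | app M N ihM ihN => simp only [subst, ihM, ihN]

theorem rename_subst1 {Γ Δ : List Ty} (r : Ren Γ Δ) {σ τ : Ty} (M : Tm (σ :: Γ) τ) (N : Tm Γ σ) :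
    rename r (subst1 M N) = subst1 (rename (r.lift σ) M) (rename r N) := by
  simp only [subst1, rename_subst, subst_rename]
  congr 1
  ext σ' v; cases v <;> rfl

theorem subst1_rename_lift_subst_lift {Γ Δ Θ : List Ty} (s : Subst Γ Δ) (r : Ren Δ Θ) {σ τ : Ty}
    (M : Tm (σ :: Γ) τ) (N : Tm Θ σ) :
    subst1 (rename (r.lift σ) (subst (s.lift σ) M)) N = subst ((s.compRen r).scons N) M := by
  simp only [subst1, subst_rename, subst_subst]
  congr 1
  ext σ' v
  cases v with
  | zero => rfl
  | succ w =>
    show subst _ (rename Ren.weak (s σ' w)) = rename r (s σ' w)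
    rw [subst_rename, ← subst_ofRen]
    rfl

/-! ### β-reduction and weak normalization -/

inductive BetaStep : {Γ : List Ty} → {σ : Ty} → Tm Γ σ → Tm Γ σ → Prop
  | beta {Γ σ τ} (M : Tm (σ :: Γ) τ) (N : Tm Γ σ) : BetaStep (M.lam.app N) (subst1 M N)
  | appL {Γ σ τ} {M M' : Tm Γ (.arrow σ τ)} (N : Tm Γ σ) :
      BetaStep M M' → BetaStep (M.app N) (M'.app N)
  | appR {Γ σ τ} (M : Tm Γ (.arrow σ τ)) {N N' : Tm Γ σ} :
      BetaStep N N' → BetaStep (M.app N) (M.app N')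
  | lam {Γ σ τ} {M M' : Tm (σ :: Γ) τ} : BetaStep M M' → BetaStep M.lam M'.lam

abbrev BetaSteps {Γ : List Ty} {σ : Ty} : Tm Γ σ → Tm Γ σ → Prop := Relation.ReflTransGen BetaStep

theorem BetaSteps.appL {Γ : List Ty} {σ τ : Ty} {M M' : Tm Γ (.arrow σ τ)} (N : Tm Γ σ)
    (h : BetaSteps M M') : BetaSteps (M.app N) (M'.app N) :=
  Relation.ReflTransGen.lift (·.app N) (fun _ _ => BetaStep.appL N) _ _ h

theorem BetaSteps.appR {Γ : List Ty} {σ τ : Ty} (M : Tm Γ (.arrow σ τ)) {N N' : Tm Γ σ}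
    (h : BetaSteps N N') : BetaSteps (M.app N) (M.app N') :=
  Relation.ReflTransGen.lift M.app (fun _ _ => BetaStep.appR M) _ _ h

theorem BetaSteps.lam {Γ : List Ty} {σ τ : Ty} {M M' : Tm (σ :: Γ) τ} (h : BetaSteps M M') :
    BetaSteps M.lam M'.lam :=
  Relation.ReflTransGen.lift Tm.lam (fun _ _ => BetaStep.lam) _ _ h

theorem BetaStep.rename {Γ Δ : List Ty} {σ : Ty} {M N : Tm Γ σ} (r : Ren Γ Δ) (h : BetaStep M N) :
    BetaStep (_root_.rename r M) (_root_.rename r N) := by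
  induction h generalizing Δ with
  | beta M N => rw [rename_subst1]; exact .beta _ _
  | appL N _ ih => exact .appL _ (ih r)
  | appR M _ ih => exact .appR _ (ih r)
  | lam _ ih => exact .lam (ih _)

theorem BetaSteps.rename {Γ Δ : List Ty} {σ : Ty} {M N : Tm Γ σ} (r : Ren Γ Δ)
    (h : BetaSteps M N) : BetaSteps (_root_.rename r M) (_root_.rename r N) :=
  Relation.ReflTransGen.lift (_root_.rename r) (fun _ _ => BetaStep.rename r) _ _ h

theorem BetaStep.betaEta {Γ : List Ty} {σ : Ty} {M N : Tm Γ σ} (h : BetaStep M N) :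
    BetaEta M N := by
  induction h with
  | beta M N => exact .beta M N
  | appL N _ ih => exact .app_congr ih (.refl N)
  | appR M _ ih => exact .app_congr (.refl M) ih
  | lam _ ih => exact .lam_congr ih

theorem BetaSteps.betaEta {Γ : List Ty} {σ : Ty} {M N : Tm Γ σ} (h : BetaSteps M N) :
    BetaEta M N := by
  induction h with
  | refl => exact .refl _
  | tail _ hstep ih => exact ih.trans hstep.betaEta

mutual
  theorem NeutralForm.rename {Γ Δ : List Ty} (r : Ren Γ Δ) :
      ∀ {σ : Ty} {M : Tm Γ σ}, NeutralForm M → NeutralForm (_root_.rename r M)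
    | _, _, .var _ => .var _
    | _, _, .app hM hN => .app (hM.rename r) (hN.rename r)
  theorem NormalForm.rename {Γ Δ : List Ty} (r : Ren Γ Δ) :
      ∀ {σ : Ty} {M : Tm Γ σ}, NormalForm M → NormalForm (_root_.rename r M)
    | _, _, .of_neutral hM => .of_neutral (hM.rename r)
    | _, _, .lam hM => .lam (hM.rename _)
end

def WeaklyNormalizing {Γ : List Ty} {σ : Ty} (M : Tm Γ σ) : Prop :=
  ∃ P, BetaSteps M P ∧ NormalForm P

theorem WeaklyNormalizing.rename {Γ Δ : List Ty} {σ : Ty} {M : Tm Γ σ} (r : Ren Γ Δ)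
    (h : WeaklyNormalizing M) : WeaklyNormalizing (rename r M) :=
  let ⟨P, hMP, hP⟩ := h
  ⟨_root_.rename r P, hMP.rename r, hP.rename r⟩

theorem WeaklyNormalizing.of_betaStep {Γ : List Ty} {σ : Ty} {M M' : Tm Γ σ}
    (hM : BetaStep M M') (h : WeaklyNormalizing M') : WeaklyNormalizing M :=
  let ⟨P, hMP, hP⟩ := h
  ⟨P, .head hM hMP, hP⟩

/-- Tait's reducibility predicate. -/
def Tait : (σ : Ty) → {Γ : List Ty} → Tm Γ σ → Prop
  | .o, _, M => WeaklyNormalizing M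
  | .arrow σ τ, Γ, M =>
      WeaklyNormalizing M ∧ ∀ Δ (r : Ren Γ Δ) (N : Tm Δ σ), Tait σ N → Tait τ ((rename r M).app N)

namespace Tait

theorem weaklyNormalizing {σ : Ty} {Γ : List Ty} {M : Tm Γ σ} (h : Tait σ M) :
    WeaklyNormalizing M := by
  cases σ with
  | o => exact h
  | arrow σ τ => exact h.1

theorem rename {σ : Ty} {Γ Δ : List Ty} (r : Ren Γ Δ) {M : Tm Γ σ} (h : Tait σ M) :
    Tait σ (_root_.rename r M) := by
  cases σ with
  | o => exact WeaklyNormalizing.rename r h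
  | arrow σ τ =>
    refine ⟨h.1.rename r, fun Θ r' N hN => ?_⟩
    rw [rename_rename]
    exact h.2 Θ (r'.comp r) N hN

theorem of_betaStep {σ : Ty} {Γ : List Ty} {M M' : Tm Γ σ} (hM : BetaStep M M')
    (h : Tait σ M') : Tait σ M := by
  induction σ generalizing Γ with
  | o => exact WeaklyNormalizing.of_betaStep hM h
  | arrow σ τ _ ihτ =>
    exact ⟨h.1.of_betaStep hM, fun Δ r N hN => ihτ (.appL N (hM.rename r)) (h.2 Δ r N hN)⟩

theorem of_neutral {σ : Ty} {Γ : List Ty} {M P : Tm Γ σ} (hMP : BetaSteps M P)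
    (hP : NeutralForm P) : Tait σ M := by
  induction σ generalizing Γ with
  | o => exact ⟨P, hMP, .of_neutral hP⟩
  | arrow σ τ _ ihτ =>
    refine ⟨⟨P, hMP, .of_neutral hP⟩, fun Δ r N hN => ?_⟩
    obtain ⟨Q, hNQ, hQ⟩ := hN.weaklyNormalizing
    exact ihτ (((hMP.rename r).appL N).trans (hNQ.appR _)) (.app (hP.rename r) hQ)

theorem var {σ : Ty} {Γ : List Ty} (v : Var Γ σ) : Tait σ (.var v) :=
  of_neutral .refl (.var v)

theorem subst {Γ : List Ty} {σ : Ty} (M : Tm Γ σ) {Δ : List Ty} (s : Subst Γ Δ)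
    (hs : ∀ τ v, Tait τ (s τ v)) : Tait σ (_root_.subst s M) := by
  induction M generalizing Δ with
  | var v => exact hs _ v
  | app M N ihM ihN =>
    simpa only [_root_.subst, rename_id] using (ihM s hs).2 Δ (Ren.id Δ) _ (ihN s hs)
  | @lam Γ σ τ M ih =>
    have hlift : ∀ τ' v, Tait τ' (s.lift σ τ' v) := by
      intro τ' v
      cases v with
      | zero => exact var _
      | succ w => exact (hs _ w).rename _
    obtain ⟨P, hMP, hP⟩ := (ih (s.lift σ) hlift).weaklyNormalizing
    refine ⟨⟨P.lam, hMP.lam, .lam hP⟩, fun Θ r N hN => of_betaStep (.beta _ _) ?_⟩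
    rw [subst1_rename_lift_subst_lift]
    refine ih _ fun τ' v => ?_
    cases v with
    | zero => exact hN
    | succ w => exact (hs _ w).rename r

end Tait

theorem weaklyNormalizing {Γ : List Ty} {σ : Ty} (M : Tm Γ σ) : WeaklyNormalizing M := by
  simpa only [subst_ofRen, rename_id] using
    (Tait.subst M (Subst.ofRen (Ren.id Γ)) fun _ v => Tait.var v).weaklyNormalizing

/-! ### Invariance of the relational semantics under β -/

namespace REnv

variable {Γ : List Ty}

instance : Zero (REnv Γ) := ⟨fun _ _ => 0⟩

instance : Add (REnv Γ) := ⟨fun ρ ρ' σ v => ρ σ v + ρ' σ v⟩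

/-- Compares supports only: `Sem` tests membership, never multiplicity. -/
instance : Preorder (REnv Γ) where
  le ρ ρ' := ∀ σ v, ρ σ v ⊆ ρ' σ v
  le_refl _ _ _ := Multiset.Subset.refl _
  le_trans _ _ _ h h' σ v := Multiset.Subset.trans (h σ v) (h' σ v)

theorem self_le_add_right (ρ ρ' : REnv Γ) : ρ ≤ ρ + ρ' :=
  fun _ _ => Multiset.subset_of_le (Multiset.le_add_right _ _)

theorem self_le_add_left (ρ ρ' : REnv Γ) : ρ' ≤ ρ + ρ' :=
  fun _ _ => Multiset.subset_of_le (Multiset.le_add_left _ _)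

theorem cons_le_cons {σ : Ty} {X X' : Multiset (Web σ)} {ρ ρ' : REnv Γ} (hX : X ⊆ X')
    (h : ρ ≤ ρ') : cons X ρ ≤ cons X' ρ' := by
  intro τ v; cases v with
  | zero => exact hX
  | succ w => exact h τ w

def tail {σ : Ty} (ρ : REnv (σ :: Γ)) : REnv Γ := fun _ v => ρ _ v.succ

def comap {Δ : List Ty} (r : Ren Γ Δ) (ρ : REnv Δ) : REnv Γ := fun σ v => ρ σ (r σ v)

theorem comap_lift_cons {Δ : List Ty} (r : Ren Γ Δ) (ρ : REnv Δ) {σ : Ty} (X : Multiset (Web σ)) :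
    comap (r.lift σ) (cons X ρ) = cons X (comap r ρ) := by
  funext τ v; cases v <;> rfl

def single : {Γ : List Ty} → {σ : Ty} → Var Γ σ → Multiset (Web σ) → REnv Γ
  | _, _, .zero, X => cons X 0
  | _, _, .succ w, X => cons 0 (single w X)

theorem subset_single_self {σ : Ty} (v : Var Γ σ) (X : Multiset (Web σ)) :
    X ⊆ single v X σ v := by
  induction v with
  | zero => exact Multiset.Subset.refl _
  | succ v ih => exact ih X

end REnv

def Subst.Realizes {Γ Δ : List Ty} (s : Subst Γ Δ) (ρ : REnv Δ) (ρ' : REnv Γ) : Prop :=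
  ∀ σ v, ∀ β ∈ ρ' σ v, Sem (s σ v) ρ β

namespace Subst.Realizes

variable {Γ Δ : List Ty} {s : Subst Γ Δ} {ρ : REnv Δ}

theorem zero : s.Realizes ρ 0 := fun _ _ _ hβ => absurd hβ (Multiset.notMem_zero _)

theorem add {ρ₁ ρ₂ : REnv Γ} (h₁ : s.Realizes ρ ρ₁) (h₂ : s.Realizes ρ ρ₂) :
    s.Realizes ρ (ρ₁ + ρ₂) := fun σ v β hβ =>
  (Multiset.mem_add.1 hβ).elim (h₁ σ v β) (h₂ σ v β)

theorem single {σ : Ty} {v : Var Γ σ} {X : Multiset (Web σ)} (hX : ∀ β ∈ X, Sem (s σ v) ρ β) :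
    s.Realizes ρ (REnv.single v X) := by
  induction v with
  | zero =>
    intro τ w β hβ
    cases w with
    | zero => exact hX β hβ
    | succ w => exact absurd hβ (Multiset.notMem_zero β)
  | succ v ih =>
    intro τ w β hβ
    cases w with
    | zero => exact absurd hβ (Multiset.notMem_zero β)
    | succ w => exact ih (s := fun τ w => s τ w.succ) hX τ w β hβ

end Subst.Realizes

theorem Sem.mono {Γ : List Ty} {σ : Ty} {M : Tm Γ σ} {ρ ρ' : REnv Γ} (h : ρ ≤ ρ') {α : Web σ}
    (hM : Sem M ρ α) : Sem M ρ' α := by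
  induction M with
  | var v => exact h _ v hM
  | lam M ih => exact ih (REnv.cons_le_cons (Multiset.Subset.refl _) h) hM
  | app M N ihM ihN =>
    obtain ⟨Y, hM, hN⟩ := hM
    exact ⟨Y, ihM h hM, fun β hβ => ihN h (hN β hβ)⟩

theorem sem_rename_iff {Γ Δ : List Ty} {σ : Ty} (M : Tm Γ σ) (r : Ren Γ Δ) (ρ : REnv Δ)
    (α : Web σ) : Sem (rename r M) ρ α ↔ Sem M (ρ.comap r) α := by
  induction M generalizing Δ with
  | var v => exact Iff.rfl
  | lam M ih =>
    simp only [rename, Sem]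
    rw [ih, REnv.comap_lift_cons]
  | app M N ihM ihN =>
    simp only [rename, Sem]
    exact exists_congr fun Y => and_congr (ihM r ρ _) (forall₂_congr fun β _ => ihN r ρ β)

theorem Subst.Realizes.lift {Γ Δ : List Ty} {s : Subst Γ Δ} {ρ : REnv Δ} {ρ' : REnv Γ} {σ : Ty}
    (X : Multiset (Web σ)) (h : s.Realizes ρ ρ') : (s.lift σ).Realizes (ρ.cons X) (ρ'.cons X) := by
  intro τ v β hβ
  cases v with
  | zero => exact hβ
  | succ w => exact (sem_rename_iff _ _ _ _).2 (h τ w β hβ)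

/-- Finitely many realized environments combine into one, since `Sem` is monotone. -/
theorem Subst.Realizes.exists_forall_mem {Γ Δ : List Ty} {s : Subst Γ Δ} {ρ : REnv Δ} {σ : Ty}
    {N : Tm Γ σ} {Y : Multiset (Web σ)} (h : ∀ β ∈ Y, ∃ ρ', s.Realizes ρ ρ' ∧ Sem N ρ' β) :
    ∃ ρ', s.Realizes ρ ρ' ∧ ∀ β ∈ Y, Sem N ρ' β := by
  induction Y using Multiset.induction_on with
  | empty => exact ⟨0, .zero, fun β hβ => absurd hβ (Multiset.notMem_zero β)⟩
  | cons γ Y ih =>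
    obtain ⟨ρ₁, h₁, hγ⟩ := h γ (Multiset.mem_cons_self γ Y)
    obtain ⟨ρ₂, h₂, hY⟩ := ih fun β hβ => h β (Multiset.mem_cons_of_mem hβ)
    refine ⟨ρ₁ + ρ₂, h₁.add h₂, fun β hβ => ?_⟩
    rcases Multiset.mem_cons.1 hβ with rfl | hβ
    · exact hγ.mono (REnv.self_le_add_right _ _)
    · exact (hY β hβ).mono (REnv.self_le_add_left _ _)

theorem sem_subst_iff {Γ Δ : List Ty} {σ : Ty} (M : Tm Γ σ) (s : Subst Γ Δ) (ρ : REnv Δ)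
    (α : Web σ) : Sem (subst s M) ρ α ↔ ∃ ρ', s.Realizes ρ ρ' ∧ Sem M ρ' α := by
  induction M generalizing Δ with
  | var v =>
    refine ⟨fun h => ⟨REnv.single v {α}, .single ?_, REnv.subset_single_self v {α} ?_⟩,
      fun ⟨ρ', hρ', h⟩ => hρ' _ v α h⟩
    · intro β hβ
      rw [Multiset.mem_singleton.1 hβ]
      exact h
    · exact Multiset.mem_singleton_self α
  | @lam Γ σ τ M ih =>
    simp only [subst, Sem]
    rw [ih]
    constructor
    · rintro ⟨ρ'', hρ'', hM⟩
      refine ⟨ρ''.tail, fun τ w β hβ => ?_, hM.mono fun τ v => ?_⟩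
      · exact (sem_rename_iff (s τ w) Ren.weak (ρ.cons α.1) β).1 (hρ'' τ w.succ β hβ)
      · cases v with
        | zero => exact hρ'' σ .zero
        | succ w => exact Multiset.Subset.refl _
    · rintro ⟨ρ', hρ', hM⟩
      exact ⟨_, hρ'.lift α.1, hM⟩
  | app M N ihM ihN =>
    simp only [subst, Sem]
    constructor
    · rintro ⟨Y, hM, hN⟩
      obtain ⟨ρ₁, h₁, hM⟩ := (ihM s ρ _).1 hM
      obtain ⟨ρ₂, h₂, hN⟩ := Subst.Realizes.exists_forall_mem fun β hβ => (ihN s ρ β).1 (hN β hβ)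
      exact ⟨ρ₁ + ρ₂, h₁.add h₂, Y, hM.mono (REnv.self_le_add_right _ _),
        fun β hβ => (hN β hβ).mono (REnv.self_le_add_left _ _)⟩
    · rintro ⟨ρ', hρ', Y, hM, hN⟩
      exact ⟨Y, (ihM s ρ _).2 ⟨ρ', hρ', hM⟩, fun β hβ => (ihN s ρ β).2 ⟨ρ', hρ', hN β hβ⟩⟩

theorem sem_beta_iff {Γ : List Ty} {σ τ : Ty} (M : Tm (σ :: Γ) τ) (N : Tm Γ σ) (ρ : REnv Γ)
    (α : Web τ) : Sem (M.lam.app N) ρ α ↔ Sem (subst1 M N) ρ α := by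
  rw [subst1, sem_subst_iff]
  constructor
  · rintro ⟨Y, hM, hN⟩
    refine ⟨ρ.cons Y, fun τ v β hβ => ?_, hM⟩
    cases v with
    | zero => exact hN β hβ
    | succ w => exact hβ
  · rintro ⟨ρ', hρ', hM⟩
    refine ⟨ρ' σ .zero, hM.mono fun τ v => ?_, hρ' σ .zero⟩
    cases v with
    | zero => exact Multiset.Subset.refl _
    | succ w => exact hρ' τ w.succ

theorem BetaStep.sem_iff {Γ : List Ty} {σ : Ty} {M N : Tm Γ σ} (h : BetaStep M N) (ρ : REnv Γ)
    (α : Web σ) : Sem M ρ α ↔ Sem N ρ α := by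
  induction h with
  | beta M N => exact sem_beta_iff M N ρ α
  | appL N _ ih => exact exists_congr fun Y => and_congr (ih ρ _) Iff.rfl
  | appR M _ ih => exact exists_congr fun Y => and_congr Iff.rfl (forall₂_congr fun β _ => ih ρ β)
  | lam _ ih => exact ih _ _

theorem BetaSteps.sem_iff {Γ : List Ty} {σ : Ty} {M N : Tm Γ σ} (h : BetaSteps M N)
    (ρ : REnv Γ) (α : Web σ) : Sem M ρ α ↔ Sem N ρ α := by
  induction h with
  | refl => exact Iff.rfl
  | tail _ hstep ih => exact ih.trans (hstep.sem_iff ρ α)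

/-! ### η-long β-normal forms -/

mutual
  /-- η-long β-normal forms. -/
  inductive CNf : List Ty → Ty → Type
    | lam {Γ σ τ} : CNf (σ :: Γ) τ → CNf Γ (.arrow σ τ)
    | ne {Γ} : CNe Γ .o → CNf Γ .o
  inductive CNe : List Ty → Ty → Type
    | var {Γ σ} : Var Γ σ → CNe Γ σ
    | app {Γ σ τ} : CNe Γ (.arrow σ τ) → CNf Γ σ → CNe Γ τ
end

mutual
  def CNf.ren {Γ Δ : List Ty} (r : Ren Γ Δ) : {σ : Ty} → CNf Γ σ → CNf Δ σ
    | _, .lam C => .lam (C.ren (r.lift _))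
    | _, .ne E => .ne (E.ren r)
  def CNe.ren {Γ Δ : List Ty} (r : Ren Γ Δ) : {σ : Ty} → CNe Γ σ → CNe Δ σ
    | _, .var v => .var (r _ v)
    | _, .app E C => .app (E.ren r) (C.ren r)
end

mutual
  def CNf.emb {Γ : List Ty} : {σ : Ty} → CNf Γ σ → Tm Γ σ
    | _, .lam C => .lam C.emb
    | _, .ne E => E.emb
  def CNe.emb {Γ : List Ty} : {σ : Ty} → CNe Γ σ → Tm Γ σ
    | _, .var v => .var v
    | _, .app E C => .app E.emb C.emb
end

mutual
  theorem CNf.ren_id {Γ : List Ty} : {σ : Ty} → (C : CNf Γ σ) → C.ren (Ren.id Γ) = C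
    | _, .lam C => by rw [CNf.ren, Ren.lift_id, C.ren_id]
    | _, .ne E => by rw [CNf.ren, E.ren_id]
  theorem CNe.ren_id {Γ : List Ty} : {σ : Ty} → (E : CNe Γ σ) → E.ren (Ren.id Γ) = E
    | _, .var _ => rfl
    | _, .app E C => by rw [CNe.ren, E.ren_id, C.ren_id]
end

mutual
  theorem CNf.ren_ren {Γ Δ Θ : List Ty} (r' : Ren Δ Θ) (r : Ren Γ Δ) :
      {σ : Ty} → (C : CNf Γ σ) → (C.ren r).ren r' = C.ren (r'.comp r)
    | _, .lam C => by rw [CNf.ren, CNf.ren, CNf.ren, C.ren_ren, Ren.lift_comp]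
    | _, .ne E => by rw [CNf.ren, CNf.ren, CNf.ren, E.ren_ren]
  theorem CNe.ren_ren {Γ Δ Θ : List Ty} (r' : Ren Δ Θ) (r : Ren Γ Δ) :
      {σ : Ty} → (E : CNe Γ σ) → (E.ren r).ren r' = E.ren (r'.comp r)
    | _, .var _ => rfl
    | _, .app E C => by rw [CNe.ren, CNe.ren, CNe.ren, E.ren_ren, C.ren_ren]
end

mutual
  theorem CNf.emb_ren {Γ Δ : List Ty} (r : Ren Γ Δ) :
      {σ : Ty} → (C : CNf Γ σ) → (C.ren r).emb = rename r C.emb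
    | _, .lam C => by rw [CNf.ren, CNf.emb, CNf.emb, rename, C.emb_ren]
    | _, .ne E => by rw [CNf.ren, CNf.emb, CNf.emb, E.emb_ren]
  theorem CNe.emb_ren {Γ Δ : List Ty} (r : Ren Γ Δ) :
      {σ : Ty} → (E : CNe Γ σ) → (E.ren r).emb = rename r E.emb
    | _, .var _ => rfl
    | _, .app E C => by rw [CNe.ren, CNe.emb, CNe.emb, rename, E.emb_ren, C.emb_ren]
end

def CNe.expand : {σ : Ty} → {Γ : List Ty} → CNe Γ σ → CNf Γ σ
  | .o, _, E => .ne E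
  | .arrow _ _, _, E => .lam ((E.ren Ren.weak).app (CNe.var .zero).expand).expand

mutual
  /-- `LongNf M C`: the η-long form of the β-normal term `M` is `C`. -/
  inductive LongNf : {Γ : List Ty} → {σ : Ty} → Tm Γ σ → CNf Γ σ → Prop
    | lam {Γ σ τ} {M : Tm (σ :: Γ) τ} {C : CNf (σ :: Γ) τ} : LongNf M C → LongNf M.lam C.lam
    | ne {Γ σ} {M : Tm Γ σ} {E : CNe Γ σ} : LongNe M E → LongNf M E.expand
  inductive LongNe : {Γ : List Ty} → {σ : Ty} → Tm Γ σ → CNe Γ σ → Prop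
    | var {Γ σ} (v : Var Γ σ) : LongNe (.var v) (.var v)
    | app {Γ σ τ} {M : Tm Γ (.arrow σ τ)} {N : Tm Γ σ} {E : CNe Γ (.arrow σ τ)} {C : CNf Γ σ} :
        LongNe M E → LongNf N C → LongNe (M.app N) (E.app C)
end

mutual
  theorem NeutralForm.exists_longNe :
      ∀ {Γ : List Ty} {σ : Ty} {M : Tm Γ σ}, NeutralForm M → ∃ E, LongNe M E
    | _, _, _, .var v => ⟨_, .var v⟩
    | _, _, _, .app hM hN =>
      let ⟨_, hE⟩ := hM.exists_longNe
      let ⟨_, hC⟩ := hN.exists_longNf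
      ⟨_, .app hE hC⟩
  theorem NormalForm.exists_longNf :
      ∀ {Γ : List Ty} {σ : Ty} {M : Tm Γ σ}, NormalForm M → ∃ C, LongNf M C
    | _, _, _, .of_neutral hM => let ⟨_, hE⟩ := hM.exists_longNe; ⟨_, .ne hE⟩
    | _, _, _, .lam hM => let ⟨_, hC⟩ := hM.exists_longNf; ⟨_, .lam hC⟩
end

theorem BetaEta.rename {Γ Δ : List Ty} {σ : Ty} {M N : Tm Γ σ} (h : BetaEta M N) (r : Ren Γ Δ) :
    BetaEta (_root_.rename r M) (_root_.rename r N) := by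
  induction h generalizing Δ with
  | refl M => exact .refl _
  | symm _ ih => exact (ih r).symm
  | trans _ _ ih₁ ih₂ => exact (ih₁ r).trans (ih₂ r)
  | app_congr _ _ ih₁ ih₂ => exact .app_congr (ih₁ r) (ih₂ r)
  | lam_congr _ ih => exact .lam_congr (ih _)
  | beta M N => rw [rename_subst1]; exact .beta _ _
  | @eta Γ σ τ M =>
    have h : _root_.rename (r.lift σ) (_root_.rename Ren.weak M) =
        _root_.rename Ren.weak (_root_.rename r M) := by
      rw [rename_rename, rename_rename]; rfl
    simp only [_root_.rename]
    rw [h]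
    exact .eta _

theorem BetaEta.expand {σ : Ty} {Γ : List Ty} {M : Tm Γ σ} {E : CNe Γ σ} (h : BetaEta M E.emb) :
    BetaEta M E.expand.emb := by
  induction σ generalizing Γ with
  | o => exact h
  | arrow σ τ ihσ ihτ =>
    refine (BetaEta.eta M).trans (.lam_congr (ihτ ?_))
    rw [CNe.emb, CNe.emb_ren]
    exact .app_congr (h.rename _) (ihσ (.refl _))

mutual
  theorem LongNf.betaEta : ∀ {Γ : List Ty} {σ : Ty} {M : Tm Γ σ} {C : CNf Γ σ},
      LongNf M C → BetaEta M C.emb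
    | _, _, _, _, .lam h => .lam_congr h.betaEta
    | _, _, _, _, .ne h => h.betaEta.expand
  theorem LongNe.betaEta : ∀ {Γ : List Ty} {σ : Ty} {M : Tm Γ σ} {E : CNe Γ σ},
      LongNe M E → BetaEta M E.emb
    | _, _, _, _, .var _ => .refl _
    | _, _, _, _, .app hE hC => .app_congr hE.betaEta hC.betaEta
end

/-- The relational semantics is covariant, though not invariant, under η-expansion. -/
theorem Sem.expand {σ : Ty} {Γ : List Ty} {E : CNe Γ σ} {ρ : REnv Γ} {α : Web σ}
    (h : Sem E.emb ρ α) : Sem E.expand.emb ρ α := by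
  induction σ generalizing Γ with
  | o => exact h
  | arrow σ τ ihσ ihτ =>
    refine ihτ ⟨α.1, ?_, fun β hβ => ihσ hβ⟩
    rw [CNe.emb_ren]
    exact (sem_rename_iff E.emb Ren.weak _ _).2 h

mutual
  theorem LongNf.sem : ∀ {Γ : List Ty} {σ : Ty} {M : Tm Γ σ} {C : CNf Γ σ},
      LongNf M C → ∀ {ρ α}, Sem M ρ α → Sem C.emb ρ α
    | _, _, _, _, .lam h, _, _, hM => h.sem hM
    | _, _, _, _, .ne h, _, _, hM => (h.sem hM).expand
  theorem LongNe.sem : ∀ {Γ : List Ty} {σ : Ty} {M : Tm Γ σ} {E : CNe Γ σ},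
      LongNe M E → ∀ {ρ α}, Sem M ρ α → Sem E.emb ρ α
    | _, _, _, _, .var _, _, _, hM => hM
    | _, _, _, _, .app hE hC, _, _, hM => by
      obtain ⟨Y, hM, hN⟩ := hM
      exact ⟨Y, hE.sem hM, fun β hβ => hC.sem (hN β hβ)⟩
end

/-! ### Normalization by evaluation -/

def Val : List Ty → Ty → Type
  | Γ, .o => CNf Γ .o
  | Γ, .arrow σ τ => ∀ Δ, Ren Γ Δ → Val Δ σ → Val Δ τ

def Val.ren : {σ : Ty} → {Γ Δ : List Ty} → Ren Γ Δ → Val Γ σ → Val Δ σ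
  | .o, _, _, r, v => CNf.ren r v
  | .arrow _ _, _, _, r, f => fun Θ r' a => f Θ (r'.comp r) a

theorem Val.ren_ren {σ : Ty} {Γ Δ Θ : List Ty} (r' : Ren Δ Θ) (r : Ren Γ Δ) (v : Val Γ σ) :
    (v.ren r).ren r' = v.ren (r'.comp r) := by
  cases σ with
  | o => exact CNf.ren_ren r' r v
  | arrow σ τ => rfl

theorem Val.ren_id {σ : Ty} {Γ : List Ty} (v : Val Γ σ) : v.ren (Ren.id Γ) = v := by
  cases σ with
  | o => exact CNf.ren_id v
  | arrow σ τ => rfl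

def VEnv (Γ Δ : List Ty) : Type := ∀ σ, Var Γ σ → Val Δ σ

namespace VEnv

def cons {Γ Δ : List Ty} {σ : Ty} (a : Val Δ σ) (δ : VEnv Γ Δ) : VEnv (σ :: Γ) Δ :=
  fun _ v => match v with | .zero => a | .succ w => δ _ w

def ren {Γ Δ Θ : List Ty} (r : Ren Δ Θ) (δ : VEnv Γ Δ) : VEnv Γ Θ := fun σ v => (δ σ v).ren r

def comap {Γ Γ' Δ : List Ty} (r : Ren Γ Γ') (δ : VEnv Γ' Δ) : VEnv Γ Δ := fun σ v => δ σ (r σ v)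

theorem ren_cons {Γ Δ Θ : List Ty} (r : Ren Δ Θ) {σ : Ty} (a : Val Δ σ) (δ : VEnv Γ Δ) :
    (cons a δ).ren r = cons (a.ren r) (δ.ren r) := by
  funext τ v; cases v <;> rfl

theorem ren_ren {Γ Δ Θ Θ' : List Ty} (r' : Ren Θ Θ') (r : Ren Δ Θ) (δ : VEnv Γ Δ) :
    (δ.ren r).ren r' = δ.ren (r'.comp r) := by
  funext τ v; exact Val.ren_ren r' r (δ τ v)

theorem ren_id {Γ Δ : List Ty} (δ : VEnv Γ Δ) : δ.ren (Ren.id Δ) = δ := by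
  funext τ v; exact Val.ren_id (δ τ v)

theorem comap_weak_cons {Γ Δ : List Ty} {σ : Ty} (a : Val Δ σ) (δ : VEnv Γ Δ) :
    (cons a δ).comap Ren.weak = δ := rfl

end VEnv

mutual
  def reflect : {σ : Ty} → {Γ : List Ty} → CNe Γ σ → Val Γ σ
    | .o, _, E => .ne E
    | .arrow _ _, _, E => fun _ r a => reflect (.app (E.ren r) (reify a))
  def reify : {σ : Ty} → {Γ : List Ty} → Val Γ σ → CNf Γ σ
    | .o, _, v => v
    | .arrow σ _, Γ, f => .lam (reify (f (σ :: Γ) Ren.weak (reflect (.var .zero))))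
end

def eval {Γ : List Ty} : {σ : Ty} → Tm Γ σ → {Δ : List Ty} → VEnv Γ Δ → Val Δ σ
  | _, .var v, _, δ => δ _ v
  | _, .lam M, _, δ => fun _ r a => eval M (.cons a (δ.ren r))
  | _, .app M N, Δ, δ => eval M δ Δ (Ren.id Δ) (eval N δ)

theorem eval_rename {Γ Γ' Δ : List Ty} {σ : Ty} (M : Tm Γ σ) (r : Ren Γ Γ') (δ : VEnv Γ' Δ) :
    eval (rename r M) δ = eval M (δ.comap r) := by
  induction M generalizing Γ' Δ with
  | var v => rfl
  | lam M ih =>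
    funext Θ r' a
    simp only [rename, eval, ih]
    congr 1
    funext τ v; cases v <;> rfl
  | app M N ihM ihN => simp only [rename, eval, ihM, ihN]

def Val.Natural {σ τ : Ty} (R : ∀ {Δ : List Ty}, Val Δ σ → Val Δ σ → Prop)
    (S : ∀ {Δ : List Ty}, Val Δ τ → Val Δ τ → Prop) {Γ : List Ty} (f : Val Γ (.arrow σ τ)) :
    Prop :=
  ∀ {Δ Θ : List Ty} (r : Ren Γ Δ) (r' : Ren Δ Θ) (a a' : Val Δ σ), R a a' →
    S ((f Δ r a).ren r') (f Θ (r'.comp r) (a'.ren r'))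

theorem Val.Natural.ren {σ τ : Ty} {R : ∀ {Δ : List Ty}, Val Δ σ → Val Δ σ → Prop}
    {S : ∀ {Δ : List Ty}, Val Δ τ → Val Δ τ → Prop} {Γ Δ : List Ty} {f : Val Γ (.arrow σ τ)}
    (hf : Val.Natural R S f) (r : Ren Γ Δ) : Val.Natural R S (f.ren r) :=
  fun r₁ => hf (r₁.comp r)

/-- The Kripke logical partial equivalence on values. -/
def VEq : (σ : Ty) → {Γ : List Ty} → Val Γ σ → Val Γ σ → Prop
  | .o, _, n, n' => n = n'
  | .arrow σ τ, Γ, f, f' =>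
      (∀ {Δ : List Ty} (r : Ren Γ Δ) (a a' : Val Δ σ), VEq σ a a' → VEq τ (f Δ r a) (f' Δ r a')) ∧
      Val.Natural (VEq σ) (VEq τ) f ∧ Val.Natural (VEq σ) (VEq τ) f'

namespace VEq

theorem symm {σ : Ty} {Γ : List Ty} {v v' : Val Γ σ} (h : VEq σ v v') : VEq σ v' v := by
  induction σ generalizing Γ with
  | o => exact Eq.symm h
  | arrow σ τ ihσ ihτ => exact ⟨fun r a a' ha => ihτ (h.1 r a' a (ihσ ha)), h.2.2, h.2.1⟩

theorem trans {σ : Ty} {Γ : List Ty} {v₁ v₂ v₃ : Val Γ σ} (h : VEq σ v₁ v₂) (h' : VEq σ v₂ v₃) :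
    VEq σ v₁ v₃ := by
  induction σ generalizing Γ with
  | o => exact Eq.trans h h'
  | arrow σ τ ihσ ihτ =>
    exact ⟨fun r a a' ha => ihτ (h.1 r a a (ihσ ha ha.symm)) (h'.1 r a a' ha), h.2.1, h'.2.2⟩

theorem refl_left {σ : Ty} {Γ : List Ty} {v v' : Val Γ σ} (h : VEq σ v v') : VEq σ v v :=
  h.trans h.symm

theorem refl_right {σ : Ty} {Γ : List Ty} {v v' : Val Γ σ} (h : VEq σ v v') : VEq σ v' v' :=
  h.symm.trans h

theorem ren {σ : Ty} {Γ Δ : List Ty} (r : Ren Γ Δ) {v v' : Val Γ σ} (h : VEq σ v v') :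
    VEq σ (v.ren r) (v'.ren r) := by
  cases σ with
  | o => exact congrArg (CNf.ren r) h
  | arrow σ τ => exact ⟨fun r' => h.1 (r'.comp r), Val.Natural.ren h.2.1 r, Val.Natural.ren h.2.2 r⟩

end VEq

theorem Val.ren_reflect {σ : Ty} {Γ Δ : List Ty} (r : Ren Γ Δ) (E : CNe Γ σ) :
    (reflect E).ren r = reflect (E.ren r) := by
  cases σ with
  | o => rfl
  | arrow σ τ =>
    funext Θ r' a
    simp only [Val.ren, reflect, CNe.ren_ren]

mutual
  theorem VEq.reify_eq : {σ : Ty} → {Γ : List Ty} → {v v' : Val Γ σ} → VEq σ v v' →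
      reify v = reify v'
    | .o, _, _, _, h => h
    | .arrow _ _, _, _, _, h => by
      simp only [reify]
      rw [(h.1 _ _ _ (VEq.reflect_self (.var .zero))).reify_eq]
  theorem VEq.reflect_self : {σ : Ty} → {Γ : List Ty} → (E : CNe Γ σ) →
      VEq σ (reflect E) (reflect E)
    | .o, _, _ => rfl
    | .arrow σ τ, Γ, E => by
      have natural : Val.Natural (VEq σ) (VEq τ) (reflect E) := by
        intro Δ Θ r r' a a' ha
        simp only [reflect]
        rw [Val.ren_reflect, CNe.ren, CNe.ren_ren, ha.refl_left.ren_reify, (ha.ren r').reify_eq]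
        exact VEq.reflect_self _
      refine ⟨fun r a a' ha => ?_, natural, natural⟩
      simp only [reflect]
      rw [ha.reify_eq]
      exact VEq.reflect_self _
  theorem VEq.ren_reify : {σ : Ty} → {Γ Δ : List Ty} → {f : Val Γ σ} → VEq σ f f →
      (r : Ren Γ Δ) → (reify f).ren r = reify (f.ren r)
    | .o, _, _, _, _, _ => rfl
    | .arrow σ τ, Γ, Δ, f, hf, r => by
      simp only [reify, CNf.ren]
      rw [(hf.1 _ _ _ (VEq.reflect_self _)).ren_reify,
        (hf.2.1 _ _ _ _ (VEq.reflect_self _)).reify_eq, Val.ren_reflect]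
      rfl
end

def VEnv.Equiv {Γ Δ : List Ty} (δ δ' : VEnv Γ Δ) : Prop := ∀ σ v, VEq σ (δ σ v) (δ' σ v)

namespace VEnv.Equiv

variable {Γ Δ : List Ty} {δ δ' : VEnv Γ Δ}

theorem symm (h : δ.Equiv δ') : δ'.Equiv δ := fun σ v => (h σ v).symm

theorem refl_left (h : δ.Equiv δ') : δ.Equiv δ := fun σ v => (h σ v).refl_left

theorem refl_right (h : δ.Equiv δ') : δ'.Equiv δ' := fun σ v => (h σ v).refl_right

theorem cons {σ : Ty} {a a' : Val Δ σ} (ha : VEq σ a a') (h : δ.Equiv δ') :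
    (VEnv.cons a δ).Equiv (VEnv.cons a' δ') := by
  intro τ v
  cases v with
  | zero => exact ha
  | succ w => exact h τ w

theorem ren {Θ : List Ty} (r : Ren Δ Θ) (h : δ.Equiv δ') : (δ.ren r).Equiv (δ'.ren r) :=
  fun σ v => (h σ v).ren r

end VEnv.Equiv

theorem Val.Natural.eval_lam {Γ : List Ty} {σ τ : Ty} {B : Tm (σ :: Γ) τ}
    (hB : ∀ {Δ Θ : List Ty} {δ δ' : VEnv (σ :: Γ) Δ}, δ.Equiv δ' → ∀ r : Ren Δ Θ,
      VEq τ (eval B (δ.ren r)) ((eval B δ').ren r))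
    {Δ : List Ty} {δ : VEnv Γ Δ} (hδ : δ.Equiv δ) : Val.Natural (VEq σ) (VEq τ) (eval B.lam δ) := by
  intro Δ₁ Θ₁ r₁ r₂ a a' ha
  have congr : ∀ {Δ'} {δ₁ δ₁' : VEnv (σ :: Γ) Δ'}, δ₁.Equiv δ₁' →
      VEq τ (eval B δ₁) (eval B δ₁') := by
    intro Δ' δ₁ δ₁' h
    simpa only [VEnv.ren_id, Val.ren_id] using hB h (Ren.id Δ')
  have h := hB ((hδ.ren r₁).cons ha.refl_left) r₂
  rw [VEnv.ren_cons, VEnv.ren_ren] at h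
  exact h.symm.trans (congr ((hδ.ren _).cons (ha.ren r₂)))

theorem eval_natural {Γ : List Ty} {σ : Ty} (M : Tm Γ σ) {Δ Θ : List Ty} {δ δ' : VEnv Γ Δ}
    (h : δ.Equiv δ') (r : Ren Δ Θ) : VEq σ (eval M (δ.ren r)) ((eval M δ').ren r) := by
  induction M generalizing Δ Θ with
  | var v => exact (h _ v).ren r
  | lam B ih =>
    refine ⟨fun r' a a' ha => ?_, Val.Natural.eval_lam ih (h.refl_left.ren r),
      Val.Natural.ren (Val.Natural.eval_lam ih h.refl_right) r⟩
    show VEq _ (eval B (.cons a ((δ.ren r).ren r'))) (eval B (.cons a' (δ'.ren (r'.comp r))))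
    rw [VEnv.ren_ren]
    simpa only [VEnv.ren_id, Val.ren_id] using ih ((h.ren _).cons ha) (Ren.id _)
  | app F A ihF ihA =>
    have hF : VEq _ (eval F δ') (eval F δ') := by
      simpa only [VEnv.ren_id, Val.ren_id] using ihF h.refl_right (Ren.id Δ)
    have hA : VEq _ (eval A δ') (eval A δ') := by
      simpa only [VEnv.ren_id, Val.ren_id] using ihA h.refl_right (Ren.id Δ)
    exact ((ihF h r).1 (Ren.id Θ) _ _ (ihA h r)).trans (hF.2.1 (Ren.id Δ) r _ _ hA).symm

theorem eval_congr {Γ : List Ty} {σ : Ty} (M : Tm Γ σ) {Δ : List Ty} {δ δ' : VEnv Γ Δ}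
    (h : δ.Equiv δ') : VEq σ (eval M δ) (eval M δ') := by
  simpa only [VEnv.ren_id, Val.ren_id] using eval_natural M h (Ren.id Δ)

theorem eval_subst {Γ Γ' Δ : List Ty} {σ : Ty} (M : Tm Γ σ) (s : Subst Γ Γ')
    {δ δ' : VEnv Γ' Δ} (h : δ.Equiv δ') :
    VEq σ (eval (subst s M) δ) (eval M fun τ v => eval (s τ v) δ') := by
  induction M generalizing Γ' Δ with
  | var v => exact eval_congr (s _ v) h
  | app F A ihF ihA => exact (ihF s h).1 (Ren.id Δ) _ _ (ihA s h)
  | @lam Γ σ τ B ih =>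
    refine ⟨fun r a a' ha => (ih (s.lift σ) ((h.ren r).cons ha)).trans (eval_congr B ?_),
      Val.Natural.eval_lam (eval_natural _) h.refl_left,
      Val.Natural.eval_lam (eval_natural B) fun τ v => eval_congr (s τ v) h.refl_right⟩
    intro τ v
    cases v with
    | zero => exact ha.refl_right
    | succ w =>
      show VEq τ (eval (rename Ren.weak (s τ w)) (.cons a' (δ'.ren r))) ((eval (s τ w) δ').ren r)
      rw [eval_rename, VEnv.comap_weak_cons]
      exact eval_natural (s τ w) h.refl_right r

theorem BetaEta.eval {Γ : List Ty} {σ : Ty} {M N : Tm Γ σ} (hMN : BetaEta M N) {Δ : List Ty}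
    {δ δ' : VEnv Γ Δ} (h : δ.Equiv δ') : VEq σ (_root_.eval M δ) (_root_.eval N δ') := by
  induction hMN generalizing Δ with
  | refl M => exact eval_congr M h
  | symm _ ih => exact (ih h.symm).symm
  | trans _ _ ih₁ ih₂ => exact (ih₁ h.refl_left).trans (ih₂ h)
  | app_congr _ _ ih₁ ih₂ => exact (ih₁ h).1 (Ren.id Δ) _ _ (ih₂ h)
  | @lam_congr Γ σ τ B B' _ ih =>
    exact ⟨fun r a a' ha => ih ((h.ren r).cons ha),
      Val.Natural.eval_lam (eval_natural B) h.refl_left,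
      Val.Natural.eval_lam (eval_natural B') h.refl_right⟩
  | @beta Γ σ τ B N =>
    show VEq τ (_root_.eval B (.cons (_root_.eval N δ) (δ.ren (Ren.id Δ)))) _
    have henv :
        (fun τ v => _root_.eval (Subst.cons N τ v) δ') = VEnv.cons (_root_.eval N δ') δ' := by
      funext τ v; cases v <;> rfl
    have hsubst := eval_subst B (Subst.cons N) h.refl_right
    rw [henv] at hsubst
    rw [VEnv.ren_id]
    exact (eval_congr B (h.cons (eval_congr N h))).trans hsubst.symm
  | @eta Γ σ τ M =>
    refine ⟨fun r a a' ha => ?_, (eval_congr M h).refl_left.2.1,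
      Val.Natural.eval_lam (eval_natural _) h.refl_right⟩
    show VEq τ _ (_root_.eval (_root_.rename Ren.weak M) (.cons a' (δ'.ren r)) _ (Ren.id _) a')
    rw [eval_rename, VEnv.comap_weak_cons]
    exact ((eval_congr M h).1 r a a ha.refl_left).trans
      ((eval_natural M h.refl_right r).symm.1 (Ren.id _) a a' ha)

def VEnv.id (Γ : List Ty) : VEnv Γ Γ := fun _ v => reflect (.var v)

mutual
  theorem CNe.eval_emb {Γ : List Ty} : {σ : Ty} → (E : CNe Γ σ) →
      eval E.emb (VEnv.id Γ) = reflect E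
    | _, .var _ => rfl
    | _, .app E C => by
      show eval E.emb (VEnv.id Γ) Γ (Ren.id Γ) (eval C.emb (VEnv.id Γ)) = _
      rw [E.eval_emb]
      show reflect (.app (E.ren (Ren.id Γ)) (reify (eval C.emb (VEnv.id Γ)))) = _
      rw [CNe.ren_id, C.reify_eval_emb]
  theorem CNf.reify_eval_emb {Γ : List Ty} : {σ : Ty} → (C : CNf Γ σ) →
      reify (eval C.emb (VEnv.id Γ)) = C
    | _, @CNf.lam _ σ _ C => by
      have henv :
          VEnv.cons (reflect (.var .zero)) ((VEnv.id Γ).ren Ren.weak) = VEnv.id (σ :: Γ) := by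
        funext τ v
        cases v with
        | zero => rfl
        | succ w => exact Val.ren_reflect _ _
      show CNf.lam (reify (eval C.emb (VEnv.cons _ ((VEnv.id Γ).ren Ren.weak)))) = _
      rw [henv, C.reify_eval_emb]
    | _, .ne E => by
      show reify (eval E.emb (VEnv.id Γ)) = _
      rw [E.eval_emb]
      rfl
end

theorem CNf.eq_of_betaEta {Γ : List Ty} {σ : Ty} {C D : CNf Γ σ} (h : BetaEta C.emb D.emb) :
    C = D := by
  rw [← C.reify_eval_emb, ← D.reify_eval_emb]
  exact (h.eval fun _ _ => VEq.reflect_self _).reify_eq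

/-! ### The principal point of an η-long normal form -/

def Web.atom : {σ : Ty} → Web σ → ℕ
  | .o, a => a
  | .arrow _ _, p => Web.atom p.2

structure Entry (Γ : List Ty) where
  {ty : Ty}
  var : Var Γ ty
  pt : Web ty

namespace Entry

variable {Γ : List Ty}

instance : Membership (Entry Γ) (REnv Γ) := ⟨fun ρ e => e.pt ∈ ρ e.ty e.var⟩

def ren {Δ : List Ty} (r : Ren Γ Δ) (e : Entry Γ) : Entry Δ := ⟨r _ e.var, e.pt⟩

def atZero {σ : Ty} : Entry (σ :: Γ) → Option (Web σ)
  | ⟨.zero, x⟩ => some x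
  | ⟨.succ _, _⟩ => none

def unweaken {σ : Ty} : Entry (σ :: Γ) → Option (Entry Γ)
  | ⟨.zero, _⟩ => none
  | ⟨.succ w, x⟩ => some ⟨w, x⟩

theorem atZero_ren_lift {Δ : List Ty} (r : Ren Γ Δ) {σ : Ty} (e : Entry (σ :: Γ)) :
    (e.ren (r.lift σ)).atZero = e.atZero := by
  obtain ⟨v, x⟩ := e; cases v <;> rfl

theorem unweaken_ren_lift {Δ : List Ty} (r : Ren Γ Δ) {σ : Ty} (e : Entry (σ :: Γ)) :
    (e.ren (r.lift σ)).unweaken = e.unweaken.map (ren r) := by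
  obtain ⟨v, x⟩ := e; cases v <;> rfl

theorem filterMap_atZero_map_weak {σ : Ty} (D : Multiset (Entry Γ)) :
    (D.map (ren (Ren.weak (τ := σ)))).filterMap atZero = 0 := by
  rw [Multiset.filterMap_map]
  exact Multiset.eq_zero_of_forall_notMem fun x hx => by simp [atZero, ren] at hx

theorem filterMap_unweaken_map_weak {σ : Ty} (D : Multiset (Entry Γ)) :
    (D.map (ren (Ren.weak (τ := σ)))).filterMap unweaken = D := by
  rw [Multiset.filterMap_map]
  exact Multiset.filterMap_some D

theorem filterMap_atZero_singleton_zero {σ : Ty} (x : Web σ) :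
    ({⟨.zero, x⟩} : Multiset (Entry (σ :: Γ))).filterMap atZero = {x} := rfl

theorem filterMap_unweaken_singleton_zero {σ : Ty} (x : Web σ) :
    ({⟨.zero, x⟩} : Multiset (Entry (σ :: Γ))).filterMap unweaken = 0 := rfl

theorem mem_cons_filterMap_atZero {σ : Ty} {D : Multiset (Entry (σ :: Γ))} {ρ : REnv Γ}
    (h : ∀ e ∈ D.filterMap unweaken, e ∈ ρ) : ∀ e ∈ D, e ∈ ρ.cons (D.filterMap atZero) := by
  rintro ⟨v, x⟩ he
  cases v with
  | zero => exact (Multiset.mem_filterMap _ _).2 ⟨_, he, rfl⟩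
  | succ w => exact h ⟨w, x⟩ ((Multiset.mem_filterMap _ _).2 ⟨_, he, rfl⟩)

end Entry

/-! The principal point `C.point n` of `C` uses the fresh atoms `n, n + 1, …, C.next n - 1`,
one for each neutral subterm of base type, and `C.demand n` lists the points it requires of the
free variables. A neutral `E` is given the point `α` it must produce. -/
mutual
  def CNf.point {Γ : List Ty} : {σ : Ty} → CNf Γ σ → ℕ → Web σ
    | _, .lam C, n => ((C.demand n).filterMap Entry.atZero, C.point n)
    | _, .ne _, n => (n : Web .o)
  def CNf.demand {Γ : List Ty} : {σ : Ty} → CNf Γ σ → ℕ → Multiset (Entry Γ)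
    | _, .lam C, n => (C.demand n).filterMap Entry.unweaken
    | _, .ne E, n => E.demand (n : Web .o) (n + 1)
  def CNf.next {Γ : List Ty} : {σ : Ty} → CNf Γ σ → ℕ → ℕ
    | _, .lam C, n => C.next n
    | _, .ne E, n => E.next (n : Web .o) (n + 1)
  def CNe.demand {Γ : List Ty} : {σ : Ty} → CNe Γ σ → Web σ → ℕ → Multiset (Entry Γ)
    | _, .var v, α, _ => {⟨v, α⟩}
    | _, .app E C, α, n => E.demand ({C.point n}, α) (C.next n) + C.demand n
  def CNe.next {Γ : List Ty} : {σ : Ty} → CNe Γ σ → Web σ → ℕ → ℕ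
    | _, .var _, _, n => n
    | _, .app E C, α, n => E.next ({C.point n}, α) (C.next n)
end

mutual
  theorem CNf.next_ren {Γ Δ : List Ty} (r : Ren Γ Δ) :
      {σ : Ty} → (C : CNf Γ σ) → (n : ℕ) → (C.ren r).next n = C.next n
    | _, .lam C, n => C.next_ren _ n
    | _, .ne E, n => E.next_ren r _ (n + 1)
  theorem CNe.next_ren {Γ Δ : List Ty} (r : Ren Γ Δ) :
      {σ : Ty} → (E : CNe Γ σ) → (α : Web σ) → (n : ℕ) → (E.ren r).next α n = E.next α n
    | _, .var _, _, _ => rfl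
    | _, .app E C, α, n => by
      simp only [CNe.ren, CNe.next, C.next_ren, C.point_ren]
      exact E.next_ren r _ _
  theorem CNf.point_ren {Γ Δ : List Ty} (r : Ren Γ Δ) :
      {σ : Ty} → (C : CNf Γ σ) → (n : ℕ) → (C.ren r).point n = C.point n
    | _, .lam C, n => by
      simp only [CNf.ren, CNf.point, C.point_ren, C.demand_ren, Multiset.filterMap_map]
      congr 2
      funext e
      exact Entry.atZero_ren_lift r e
    | _, .ne _, _ => rfl
  theorem CNf.demand_ren {Γ Δ : List Ty} (r : Ren Γ Δ) :
      {σ : Ty} → (C : CNf Γ σ) → (n : ℕ) → (C.ren r).demand n = (C.demand n).map (Entry.ren r)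
    | _, .lam C, n => by
      simp only [CNf.ren, CNf.demand, C.demand_ren, Multiset.filterMap_map, Multiset.map_filterMap]
      congr 1
      funext e
      exact Entry.unweaken_ren_lift r e
    | _, .ne E, n => E.demand_ren r _ (n + 1)
  theorem CNe.demand_ren {Γ Δ : List Ty} (r : Ren Γ Δ) :
      {σ : Ty} → (E : CNe Γ σ) → (α : Web σ) → (n : ℕ) →
        (E.ren r).demand α n = (E.demand α n).map (Entry.ren r)
    | _, .var _, _, _ => rfl
    | _, .app E C, α, n => by
      simp only [CNe.ren, CNe.demand, C.next_ren, C.point_ren, C.demand_ren, Multiset.map_add]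
      exact congrArg (· + _) (E.demand_ren r _ _)
end

theorem CNe.exists_demand_expand {σ : Ty} {Γ : List Ty} (E : CNe Γ σ) (n : ℕ) :
    ∃ m, E.expand.demand n = E.demand (E.expand.point n) m := by
  induction σ generalizing Γ n with
  | o => exact ⟨n + 1, rfl⟩
  | arrow σ τ ihσ ihτ =>
    let V : CNf (σ :: Γ) σ := (CNe.var .zero).expand
    obtain ⟨m, hm⟩ := ihτ ((E.ren Ren.weak).app V) n
    obtain ⟨m₀, hm₀⟩ := ihσ (CNe.var (.zero : Var (σ :: Γ) σ)) m
    let β := ((E.ren Ren.weak).app V).expand.point n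
    have hD : ((E.ren Ren.weak).app V).expand.demand n =
        (E.demand ({V.point m}, β) (V.next m)).map (Entry.ren Ren.weak) + {⟨.zero, V.point m⟩} := by
      rw [hm]
      exact congrArg₂ (· + ·) (CNe.demand_ren Ren.weak E _ _) hm₀
    refine ⟨V.next m, ?_⟩
    show (((E.ren Ren.weak).app V).expand.demand n).filterMap Entry.unweaken =
      E.demand ((((E.ren Ren.weak).app V).expand.demand n).filterMap Entry.atZero, β) (V.next m)
    rw [hD]
    simp only [Multiset.filterMap_add, Entry.filterMap_atZero_map_weak,
      Entry.filterMap_unweaken_map_weak, zero_add, Entry.filterMap_atZero_singleton_zero,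
      Entry.filterMap_unweaken_singleton_zero, add_zero]

mutual
  theorem LongNf.sem_point : ∀ {Γ : List Ty} {σ : Ty} {M : Tm Γ σ} {C : CNf Γ σ},
      LongNf M C → ∀ (n : ℕ) (ρ : REnv Γ), (∀ e ∈ C.demand n, e ∈ ρ) → Sem M ρ (C.point n)
    | _, _, _, _, .lam h, n, _, hρ => h.sem_point n _ (Entry.mem_cons_filterMap_atZero hρ)
    | _, _, _, _, .ne (E := E) h, n, ρ, hρ => by
      obtain ⟨m, hm⟩ := E.exists_demand_expand n
      exact h.sem_point _ m ρ (hm ▸ hρ)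
  theorem LongNe.sem_point : ∀ {Γ : List Ty} {σ : Ty} {M : Tm Γ σ} {E : CNe Γ σ},
      LongNe M E → ∀ (α : Web σ) (n : ℕ) (ρ : REnv Γ), (∀ e ∈ E.demand α n, e ∈ ρ) → Sem M ρ α
    | _, _, _, _, .var _, _, _, _, hρ => hρ _ (Multiset.mem_singleton_self _)
    | _, _, _, _, .app (C := C) hE hC, _, n, ρ, hρ =>
      ⟨{C.point n}, hE.sem_point _ _ ρ fun e he => hρ e (Multiset.mem_add.2 (.inl he)),
        fun _ hβ => (Multiset.mem_singleton.1 hβ) ▸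
          hC.sem_point n ρ fun e he => hρ e (Multiset.mem_add.2 (.inr he))⟩
end

/-! ### Uniqueness of the term with a given principal point -/

namespace Entry

variable {Γ : List Ty}

theorem mem_filterMap_atZero {σ : Ty} {D : Multiset (Entry (σ :: Γ))} {x : Web σ} :
    x ∈ D.filterMap atZero ↔ ⟨.zero, x⟩ ∈ D := by
  refine ⟨fun h => ?_, fun h => (Multiset.mem_filterMap _ _).2 ⟨_, h, rfl⟩⟩
  obtain ⟨⟨v, y⟩, he, hx⟩ := (Multiset.mem_filterMap _ _).1 h
  cases v with
  | zero => cases hx; exact he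
  | succ w => cases hx

theorem mem_filterMap_unweaken {σ : Ty} {D : Multiset (Entry (σ :: Γ))} {e : Entry Γ} :
    e ∈ D.filterMap unweaken ↔ ⟨e.var.succ, e.pt⟩ ∈ D := by
  refine ⟨fun h => ?_, fun h => (Multiset.mem_filterMap _ _).2 ⟨_, h, rfl⟩⟩
  obtain ⟨⟨v, y⟩, he, hx⟩ := (Multiset.mem_filterMap _ _).1 h
  cases v with
  | zero => cases hx
  | succ w => cases hx; exact he

def IsSlice (S : Entry Γ → Prop) (lo hi : ℕ) (D : Multiset (Entry Γ)) : Prop :=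
  (∀ e ∈ D, S e) ∧ ∀ e, S e → lo ≤ e.pt.atom → e.pt.atom < hi → e ∈ D

theorem IsSlice.trans {S : Entry Γ → Prop} {lo₁ hi₁ lo₂ hi₂ : ℕ} {D₁ D₂ : Multiset (Entry Γ)}
    (h₁ : IsSlice (· ∈ D₂) lo₁ hi₁ D₁) (h₂ : IsSlice S lo₂ hi₂ D₂) (hlo : lo₂ ≤ lo₁)
    (hhi : hi₁ ≤ hi₂) : IsSlice S lo₁ hi₁ D₁ :=
  ⟨fun e he => h₂.1 e (h₁.1 e he), fun e he hl hh =>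
    h₁.2 e (h₂.2 e he (hlo.trans hl) (hh.trans_le hhi)) hl hh⟩

theorem IsSlice.cons {σ : Ty} {ρ : REnv Γ} {lo hi : ℕ} {D : Multiset (Entry (σ :: Γ))}
    (h : IsSlice (· ∈ ρ) lo hi (D.filterMap unweaken)) :
    IsSlice (· ∈ ρ.cons (D.filterMap atZero)) lo hi D := by
  refine ⟨mem_cons_filterMap_atZero h.1, ?_⟩
  rintro ⟨v, x⟩ he hl hh
  cases v with
  | zero => exact mem_filterMap_atZero.1 he
  | succ w => exact mem_filterMap_unweaken.1 (h.2 ⟨w, x⟩ he hl hh)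

end Entry

mutual
  theorem CNf.lt_next {Γ : List Ty} : {σ : Ty} → (C : CNf Γ σ) → (n : ℕ) → n < C.next n
    | _, .lam C, n => C.lt_next n
    | _, .ne E, n => (Nat.lt_succ_self n).trans_le (E.le_next _ (n + 1))
  theorem CNe.le_next {Γ : List Ty} : {σ : Ty} → (E : CNe Γ σ) → (α : Web σ) → (n : ℕ) →
      n ≤ E.next α n
    | _, .var _, _, _ => le_rfl
    | _, .app E C, _, n => (C.lt_next n).le.trans (E.le_next _ _)
end

def CNe.head {Γ : List Ty} : {σ : Ty} → CNe Γ σ → Web σ → ℕ → Entry Γ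
  | _, .var v, α, _ => ⟨v, α⟩
  | _, .app E C, α, n => E.head ({C.point n}, α) (C.next n)

theorem CNe.atom_head {Γ : List Ty} : {σ : Ty} → (E : CNe Γ σ) → (α : Web σ) → (n : ℕ) →
    (E.head α n).pt.atom = α.atom
  | _, .var _, _, _ => rfl
  | _, .app E C, α, n => E.atom_head ({C.point n}, α) (C.next n)

mutual
  theorem CNf.atom_mem_demand {Γ : List Ty} : {σ : Ty} → (C : CNf Γ σ) → (n : ℕ) →
      ∀ e ∈ C.demand n, n ≤ e.pt.atom ∧ e.pt.atom < C.next n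
    | _, .lam C, n, e, he => C.atom_mem_demand n _ (Entry.mem_filterMap_unweaken.1 he)
    | _, .ne E, n, e, he => by
      rcases E.atom_mem_demand (n : Web .o) (n + 1) (Nat.lt_succ_self n) e he with rfl | h
      · have h : (E.head (n : Web .o) (n + 1)).pt.atom = n := E.atom_head _ _
        rw [h]
        exact ⟨le_rfl, (Nat.lt_succ_self n).trans_le (E.le_next _ _)⟩
      · exact ⟨(Nat.le_succ n).trans h.1, h.2⟩
  theorem CNe.atom_mem_demand {Γ : List Ty} : {σ : Ty} → (E : CNe Γ σ) → (α : Web σ) →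
      (n : ℕ) → α.atom < n → ∀ e ∈ E.demand α n,
        e = E.head α n ∨ n ≤ e.pt.atom ∧ e.pt.atom < E.next α n
    | _, .var _, _, _, _, e, he => .inl (Multiset.mem_singleton.1 he)
    | _, .app E C, α, n, hα, e, he => by
      rcases Multiset.mem_add.1 he with he | he
      · rcases E.atom_mem_demand _ _ (hα.trans (C.lt_next n)) e he with h | h
        · exact .inl h
        · exact .inr ⟨(C.lt_next n).le.trans h.1, h.2⟩
      · have h := C.atom_mem_demand n e he
        exact .inr ⟨h.1, h.2.trans_le (E.le_next _ _)⟩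
end

abbrev PointedNe (Γ : List Ty) : Type := Σ τ, CNe Γ τ × Web τ

/-- `E.IsPrefix α n ⟨τ, Q, β⟩`: `Q` is an initial segment of the application spine of `E`, and
`β` is the point it must produce for `E` to produce `α`. -/
def CNe.IsPrefix {Γ : List Ty} : {σ : Ty} → CNe Γ σ → Web σ → ℕ → PointedNe Γ → Prop
  | _, .var v, α, _, t => t = ⟨_, .var v, α⟩
  | _, .app E C, α, n, t => t = ⟨_, .app E C, α⟩ ∨ E.IsPrefix ({C.point n}, α) (C.next n) t

namespace CNe.IsPrefix

theorem self {Γ : List Ty} {σ : Ty} (E : CNe Γ σ) (α : Web σ) (n : ℕ) :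
    E.IsPrefix α n ⟨σ, E, α⟩ := by
  cases E with
  | var v => rfl
  | app E C => exact .inl rfl

theorem head {Γ : List Ty} : {σ : Ty} → (E : CNe Γ σ) → (α : Web σ) → (n : ℕ) →
    E.IsPrefix α n ⟨_, .var (E.head α n).var, (E.head α n).pt⟩
  | _, .var _, _, _ => rfl
  | _, .app E C, α, n => .inr (head E ({C.point n}, α) (C.next n))

theorem eq_or_sizeOf_lt {Γ : List Ty} {t : PointedNe Γ} : {σ : Ty} → (E : CNe Γ σ) →
    (α : Web σ) → (n : ℕ) → E.IsPrefix α n t → t = ⟨σ, E, α⟩ ∨ sizeOf σ < sizeOf t.1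
  | _, .var _, _, _, h => .inl h
  | _, .app E C, α, n, h => h.imp id fun h => by
    rcases eq_or_sizeOf_lt E _ _ h with rfl | h
    · simp only [Ty.arrow.sizeOf_spec]; omega
    · simp only [Ty.arrow.sizeOf_spec] at h; omega

theorem exists_arg {Γ : List Ty} {σ' τ' : Ty} {Q : CNe Γ (.arrow σ' τ')} {Y : Multiset (Web σ')}
    {γ : Web τ'} : {τ : Ty} → (E : CNe Γ τ) → (α : Web τ) → (n : ℕ) → α.atom < n →
    E.IsPrefix α n ⟨_, Q, (Y, γ)⟩ → (⟨_, Q, (Y, γ)⟩ : PointedNe Γ) ≠ ⟨τ, E, α⟩ →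
    ∃ (C : CNf Γ σ') (m : ℕ), Y = {C.point m} ∧ n ≤ m ∧ C.next m ≤ E.next α n ∧
      Entry.IsSlice (· ∈ E.demand α n) m (C.next m) (C.demand m) ∧
      E.IsPrefix α n ⟨_, Q.app C, γ⟩
  | _, .var _, _, _, _, h, hne => absurd h hne
  | _, .app E₁ C₁, α, n, hα, h, hne => by
    have hα₁ : Web.atom (σ := .arrow _ _) ({C₁.point n}, α) < C₁.next n :=
      hα.trans (C₁.lt_next n)
    rcases h with h | h
    · exact absurd h hne
    by_cases htop : (⟨_, Q, (Y, γ)⟩ : PointedNe Γ) = ⟨_, E₁, ({C₁.point n}, α)⟩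
    · cases htop
      refine ⟨C₁, n, rfl, le_rfl, Q.le_next _ _, ⟨fun e he => Multiset.mem_add.2 (.inr he), ?_⟩,
        self _ _ _⟩
      intro e he hl hh
      rcases Multiset.mem_add.1 he with he | he
      · rcases Q.atom_mem_demand _ _ hα₁ e he with rfl | h
        · exact absurd (hl.trans_eq (Q.atom_head _ _)) (not_le.2 hα)
        · exact absurd h.1 (not_le.2 hh)
      · exact he
    · obtain ⟨C, m, hY, hm, hnext, hslice, hpre⟩ := exists_arg E₁ _ _ hα₁ h htop
      refine ⟨C, m, hY, (C₁.lt_next n).le.trans hm, hnext,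
        ⟨fun e he => Multiset.mem_add.2 (.inl (hslice.1 e he)), fun e he hl hh => ?_⟩, .inr hpre⟩
      rcases Multiset.mem_add.1 he with he | he
      · exact hslice.2 e he hl hh
      · exact absurd ((C₁.atom_mem_demand n e he).2.trans_le hm) (not_lt.2 hl)

end CNe.IsPrefix

mutual
  theorem CNe.isPrefix_of_sem {Γ : List Ty} (E : CNe Γ .o) (n : ℕ) (ρ : REnv Γ)
      (hρ : Entry.IsSlice (· ∈ ρ) n (E.next (n : Web .o) (n + 1)) (E.demand (n : Web .o) (n + 1))) :
      {τ : Ty} → (Q : CNe Γ τ) → (β : Web τ) → Sem Q.emb ρ β → β.atom = n →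
        E.IsPrefix (n : Web .o) (n + 1) ⟨τ, Q, β⟩
    | _, .var v, β, hQ, hβ => by
      -- the atom `n` occurs in `ρ` only in the head entry of `E`
      have hhead : (⟨v, β⟩ : Entry Γ) = E.head (n : Web .o) (n + 1) := by
        have hmem := hρ.2 ⟨v, β⟩ hQ hβ.ge (hβ.trans_lt ((Nat.lt_succ_self n).trans_le
          (E.le_next _ _)))
        rcases E.atom_mem_demand (n : Web .o) (n + 1) (Nat.lt_succ_self n) _ hmem with h | h
        · exact h
        · exact absurd h.1 (by simp only [hβ]; omega)
      have h := CNe.IsPrefix.head E (n : Web .o) (n + 1)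
      rwa [← hhead] at h
    | _, .app Q N, β, hQ, hβ => by
      obtain ⟨Y, hQ, hN⟩ := hQ
      have hpre := E.isPrefix_of_sem n ρ hρ Q (Y, β) hQ hβ
      obtain ⟨C, m, rfl, hm, hnext, hslice, hpre⟩ :=
        CNe.IsPrefix.exists_arg E _ _ (Nat.lt_succ_self n) hpre fun h => by cases h
      have hNC : N = C :=
        N.eq_of_sem C m ρ (hslice.trans hρ (Nat.le_succ n |>.trans hm) hnext)
          (hN _ (Multiset.mem_singleton_self _))
      rwa [hNC]
  theorem CNf.eq_of_sem {Γ : List Ty} : {σ : Ty} → (Q C : CNf Γ σ) → (n : ℕ) → (ρ : REnv Γ) →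
      Entry.IsSlice (· ∈ ρ) n (C.next n) (C.demand n) → Sem Q.emb ρ (C.point n) → Q = C
    | _, .lam Q, .lam C, n, ρ, hρ, hQ => by
      rw [Q.eq_of_sem C n _ hρ.cons hQ]
    | _, .ne Q, .ne E, n, ρ, hρ, hQ => by
      rcases CNe.IsPrefix.eq_or_sizeOf_lt E _ _ (E.isPrefix_of_sem n ρ hρ Q n hQ rfl) with h | h
      · cases h; rfl
      · exact absurd h (lt_irrefl _)
end

/-- Every closed simply-typed λ-term `M` in normal form of
type `σ` possesses a principal relational type, its 1-point `𝖬 ∈ ⟦σ⟧`: for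
every closed simply-typed λ-term `N` of type `σ`,
`M =βη N` if and only if `⊳ N : 𝖬 : σ`. -/
theorem one_point_principal {σ : Ty} (M : Tm [] σ) (hM : NormalForm M) :
    ∃ x : Web σ, ∀ N : Tm [] σ, BetaEta M N ↔ RelType N x := by
  obtain ⟨C, hMC⟩ := hM.exists_longNf
  refine ⟨C.point 0, fun N => ?_⟩
  obtain ⟨P, hNP, hP⟩ := weaklyNormalizing N
  obtain ⟨D, hPD⟩ := hP.exists_longNf
  rw [RelType, hNP.sem_iff]
  constructor
  · intro hMN
    have hDC : D = C := CNf.eq_of_betaEta <|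
      hPD.betaEta.symm.trans <| hNP.betaEta.symm.trans <| hMN.symm.trans hMC.betaEta
    subst hDC
    exact hPD.sem_point 0 REnv.nil fun e _ => nomatch e.var
  · intro hPC
    have hDC : D = C :=
      D.eq_of_sem C 0 REnv.nil ⟨fun e _ => (nomatch e.var), fun e _ => (nomatch e.var)⟩
        (hPD.sem hPC)
    subst hDC
    exact hMC.betaEta.trans <| hPD.betaEta.symm.trans hNP.betaEta.symm
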